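/- arXiv:2604.10205 — 2 statements merged into one kernel-verified Lean document; each statement's English description precedes it below -/
import Mathlib

section
/- Fix a community assignment z ∈ [k]^n and for 1 ≤ a ≤ b ≤ k let n_{ab}(z) be the number of potential edges between communities a and b (n_a n_b if a ≠ b, and n_a(n_a - 1)/2 if a = b, where n_a is the size of community a). Then the Shtarkov sum of the conditional SBM likelihood satisfies ∑_{x} sup_{P symmetric in [0,1]^{k×k}} P(x | z) = ∏_{a ≤ b} C_MN(n_{ab}(z), 2), where the sum is over all simple undirected graphs x on n labeled vertices, P(x|z) = ∏_{a ≤ b} P_{ab}^{o_{ab}(x,z)} (1 - P_{ab})^{n_{ab}(z) - o_{ab}(x,z)} with o_{ab}(x,z) the number of edges of x between communities a and b, and C_MN(m,2) = ∑_{t=0}^m binom(m,t)(t/m)^t(1-t/m)^{m-t}. -/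
/-!
Given `z`, the conditional likelihood is a product over community pairs `a ≤ b` of Bernoulli
likelihoods, each with its own free parameter `P a b`. Each factor is maximised by the empirical
frequency `o_{ab} / n_{ab}` (weighted AM-GM), and these frequencies form an admissible symmetric
matrix, so the supremum is the product of the maximal factors. A graph is a Boolean function on
potential edges, i.e. an independent choice of Boolean function on each class of edges; so the sum
over graphs of the product splits into a product over classes of sums, and the sum over one class
with `n_{ab}` edges, grouped by the number of edges present, is `C_MN(n_{ab}, 2)`.
-/

open Finset

/-- The Bernoulli Shtarkov sum `C_MN(m,2)` with the convention `0^0 = 1`. -/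
noncomputable def CMN2 (m : ℕ) : ℝ :=
  ∑ t ∈ Finset.range (m + 1),
    (m.choose t : ℝ) * ((t : ℝ) / m) ^ t * (1 - (t : ℝ) / m) ^ (m - t)

/-- Number of potential edges between communities `ab.1` and `ab.2` under assignment `z`. -/
def nabSBM (n k : ℕ) (z : Fin n → Fin k) (ab : Fin k × Fin k) : ℕ :=
  (Finset.univ.filter (fun p : {p : Fin n × Fin n // p.1 < p.2} =>
    min (z p.1.1) (z p.1.2) = ab.1 ∧ max (z p.1.1) (z p.1.2) = ab.2)).card

/-- Number of edges of the graph `x` between communities `ab.1` and `ab.2`. -/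
def oabSBM (n k : ℕ) (z : Fin n → Fin k) (x : {p : Fin n × Fin n // p.1 < p.2} → Bool)
    (ab : Fin k × Fin k) : ℕ :=
  (Finset.univ.filter (fun p : {p : Fin n × Fin n // p.1 < p.2} =>
    (min (z p.1.1) (z p.1.2) = ab.1 ∧ max (z p.1.1) (z p.1.2) = ab.2) ∧ x p = true)).card

/-- Attained at `p = t / m`; for `m = 0` it is `1`, as `x / 0 = 0` and `0 ^ 0 = 1`. -/
noncomputable def bernoulliMaxLik (m t : ℕ) : ℝ :=
  ((t : ℝ) / m) ^ t * (1 - (t : ℝ) / m) ^ (m - t)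

lemma CMN2_eq_sum_choose_mul_bernoulliMaxLik (m : ℕ) :
    CMN2 m = ∑ t ∈ range (m + 1), (m.choose t : ℝ) * bernoulliMaxLik m t := by
  simp only [CMN2, bernoulliMaxLik, mul_assoc]

lemma pow_mul_one_sub_pow_le {a p : ℝ} {m o : ℕ} (ha₀ : 0 < a) (ha₁ : a < 1)
    (hao : a * m = o) (hp₀ : 0 ≤ p) (hp₁ : p ≤ 1) :
    p ^ o * (1 - p) ^ (m - o) ≤ a ^ o * (1 - a) ^ (m - o) := by
  have hom : o ≤ m := by
    exact_mod_cast (hao ▸ mul_le_of_le_one_left m.cast_nonneg ha₁.le : (o : ℝ) ≤ m)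
  have hq₀ : 0 ≤ 1 - p := sub_nonneg.2 hp₁
  have hb₀ : 0 < 1 - a := sub_pos.2 ha₁
  have hamgm : (p / a) ^ a * ((1 - p) / (1 - a)) ^ (1 - a) ≤ 1 :=
    calc (p / a) ^ a * ((1 - p) / (1 - a)) ^ (1 - a)
        ≤ a * (p / a) + (1 - a) * ((1 - p) / (1 - a)) :=
          Real.geom_mean_le_arith_mean2_weighted ha₀.le hb₀.le (by positivity) (by positivity)
            (by ring)
      _ = 1 := by field_simp; ring
  have hratio : (p / a) ^ o * ((1 - p) / (1 - a)) ^ (m - o) ≤ 1 := by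
    have h := Real.rpow_le_one (by positivity) hamgm m.cast_nonneg
    rwa [Real.mul_rpow (by positivity) (by positivity), ← Real.rpow_mul (by positivity),
      ← Real.rpow_mul (by positivity), hao,
      show (1 - a) * m = ((m - o : ℕ) : ℝ) by rw [Nat.cast_sub hom, ← hao]; ring,
      Real.rpow_natCast, Real.rpow_natCast] at h
  rwa [div_pow, div_pow, div_mul_div_comm, div_le_one (by positivity)] at hratio

lemma pow_mul_one_sub_pow_le_bernoulliMaxLik {m o : ℕ} (ho : o ≤ m) {p : ℝ}
    (hp : p ∈ Set.Icc (0 : ℝ) 1) :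
    p ^ o * (1 - p) ^ (m - o) ≤ bernoulliMaxLik m o := by
  obtain ⟨hp₀, hp₁⟩ := hp
  rcases Nat.eq_zero_or_pos o with rfl | ho₀
  · simpa [bernoulliMaxLik] using pow_le_one₀ (sub_nonneg.2 hp₁) (by linarith)
  rcases ho.eq_or_lt with rfl | hom
  · have : (o : ℝ) / o = 1 := div_self (by positivity)
    simpa [bernoulliMaxLik, this] using pow_le_one₀ hp₀ hp₁
  have hm : (0 : ℝ) < m := by exact_mod_cast ho₀.trans hom
  exact pow_mul_one_sub_pow_le (by positivity) ((div_lt_one hm).2 (by exact_mod_cast hom))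
    (div_mul_cancel₀ _ hm.ne') hp₀ hp₁

theorem iSup_prod_bernoulli_eq_prod_bernoulliMaxLik {Θ κ : Type*} (s : Finset κ)
    (θ : Θ → κ → ℝ) (hθ : ∀ t, ∀ i ∈ s, θ t i ∈ Set.Icc (0 : ℝ) 1) (N o : κ → ℕ)
    (ho : ∀ i ∈ s, o i ≤ N i) (t₀ : Θ) (ht₀ : ∀ i ∈ s, θ t₀ i = o i / N i) :
    ⨆ t, ∏ i ∈ s, θ t i ^ o i * (1 - θ t i) ^ (N i - o i) =
      ∏ i ∈ s, bernoulliMaxLik (N i) (o i) := by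
  have : Nonempty Θ := ⟨t₀⟩
  have hle (t : Θ) :
      ∏ i ∈ s, θ t i ^ o i * (1 - θ t i) ^ (N i - o i) ≤ ∏ i ∈ s, bernoulliMaxLik (N i) (o i) :=
    prod_le_prod
      (fun i hi => mul_nonneg (pow_nonneg (hθ t i hi).1 _)
        (pow_nonneg (sub_nonneg.2 (hθ t i hi).2) _))
      fun i hi => pow_mul_one_sub_pow_le_bernoulliMaxLik (ho i hi) (hθ t i hi)
  have hattained : ∏ i ∈ s, θ t₀ i ^ o i * (1 - θ t₀ i) ^ (N i - o i) =
      ∏ i ∈ s, bernoulliMaxLik (N i) (o i) :=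
    prod_congr rfl fun i hi => by rw [ht₀ i hi, bernoulliMaxLik]
  exact le_antisymm (ciSup_le hle)
    (hattained ▸ le_ciSup ⟨_, Set.forall_mem_range.2 hle⟩ t₀)

theorem sum_bool_fun_card {F R : Type*} [Fintype F] [DecidableEq F] [AddCommMonoid R]
    (g : ℕ → R) :
    ∑ y : F → Bool, g #{e | y e = true} =
      ∑ t ∈ range (Fintype.card F + 1), (Fintype.card F).choose t • g t := by
  rw [← card_univ, ← sum_powerset_apply_card]
  exact sum_nbij' (fun y => ({e | y e = true} : Finset F)) (fun s e => decide (e ∈ s))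
    (by simp) (by simp) (fun y _ => by funext e; simp) (fun s _ => by ext e; simp) fun _ _ => rfl

/-- A Boolean function on `E` is an independent choice of Boolean function on each fibre of `c`. -/
theorem sum_bool_fun_prod_card_fiber {E ι R : Type*} [Fintype E] [DecidableEq E] [Fintype ι]
    [DecidableEq ι] [CommSemiring R] (c : E → ι) (f : ι → ℕ → R) :
    ∑ x : E → Bool, ∏ i, f i #{e | c e = i ∧ x e = true} =
      ∏ i, ∑ t ∈ range (#{e | c e = i} + 1), ((#{e | c e = i}).choose t : R) * f i t := by
  let ε : (E → Bool) ≃ ∀ i, {e // c e = i} → Bool :=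
    ((Equiv.sigmaFiberEquiv c).symm.arrowCongr (Equiv.refl Bool)).trans
      (Equiv.piCurry fun _ _ => Bool)
  have hcard (x : E → Bool) (i : ι) :
      #{e | c e = i ∧ x e = true} = #{e : {e // c e = i} | ε x i e = true} := by
    simp only [← Fintype.card_subtype]
    exact Fintype.card_congr (Equiv.subtypeSubtypeEquivSubtypeInter _ _).symm
  rw [Fintype.sum_equiv ε _ (fun y => ∏ i, f i #{e | y i e = true}) fun x => by simp only [hcard],
    ← Fintype.prod_sum fun i (y : {e // c e = i} → Bool) => f i #{e | y e = true}]
  refine prod_congr rfl fun i _ => ?_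
  rw [sum_bool_fun_card, ← Fintype.card_subtype]
  simp only [nsmul_eq_mul]

section SBM

variable {n k : ℕ} (z : Fin n → Fin k)

def communityPair (e : {p : Fin n × Fin n // p.1 < p.2}) : Fin k × Fin k :=
  (min (z e.1.1) (z e.1.2), max (z e.1.1) (z e.1.2))

lemma nabSBM_eq_card (ab : Fin k × Fin k) :
    nabSBM n k z ab = #{e | communityPair z e = ab} := by
  simp only [nabSBM, communityPair, Prod.ext_iff]

lemma oabSBM_eq_card (x : {p : Fin n × Fin n // p.1 < p.2} → Bool) (ab : Fin k × Fin k) :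
    oabSBM n k z x ab = #{e | communityPair z e = ab ∧ x e = true} := by
  simp only [oabSBM, communityPair, Prod.ext_iff]

lemma oabSBM_le_nabSBM (x : {p : Fin n × Fin n // p.1 < p.2} → Bool) (ab : Fin k × Fin k) :
    oabSBM n k z x ab ≤ nabSBM n k z ab :=
  card_le_card (monotone_filter_right _ fun _ _ h => h.1)

lemma nabSBM_eq_zero_of_not_le {ab : Fin k × Fin k} (hab : ¬ab.1 ≤ ab.2) :
    nabSBM n k z ab = 0 := by
  rw [nabSBM_eq_card, card_eq_zero, filter_eq_empty_iff]
  rintro e - rfl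
  exact hab min_le_max

noncomputable def sbmMLE (x : {p : Fin n × Fin n // p.1 < p.2} → Bool) (a b : Fin k) : ℝ :=
  (oabSBM n k z x (min a b, max a b) : ℝ) / nabSBM n k z (min a b, max a b)

lemma sbmMLE_mem_Icc (x : {p : Fin n × Fin n // p.1 < p.2} → Bool) (a b : Fin k) :
    sbmMLE z x a b ∈ Set.Icc (0 : ℝ) 1 :=
  ⟨by unfold sbmMLE; positivity,
    div_le_one_of_le₀ (by exact_mod_cast oabSBM_le_nabSBM z x _) (Nat.cast_nonneg _)⟩

lemma sbmMLE_comm (x : {p : Fin n × Fin n // p.1 < p.2} → Bool) (a b : Fin k) :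
    sbmMLE z x a b = sbmMLE z x b a := by
  simp only [sbmMLE, min_comm a b, max_comm a b]

lemma sbmMLE_of_le (x : {p : Fin n × Fin n // p.1 < p.2} → Bool) {a b : Fin k} (hab : a ≤ b) :
    sbmMLE z x a b = (oabSBM n k z x (a, b) : ℝ) / nabSBM n k z (a, b) := by
  simp only [sbmMLE, min_eq_left hab, max_eq_right hab]

theorem iSup_sbmLikelihood_eq (x : {p : Fin n × Fin n // p.1 < p.2} → Bool) :
    (⨆ P : {P : Fin k → Fin k → ℝ //
          (∀ a b, P a b ∈ Set.Icc (0 : ℝ) 1) ∧ (∀ a b, P a b = P b a)},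
        ∏ ab ∈ univ.filter (fun ab : Fin k × Fin k => ab.1 ≤ ab.2),
          (P.1 ab.1 ab.2) ^ (oabSBM n k z x ab) *
            (1 - P.1 ab.1 ab.2) ^ (nabSBM n k z ab - oabSBM n k z x ab)) =
      ∏ ab ∈ univ.filter (fun ab : Fin k × Fin k => ab.1 ≤ ab.2),
        bernoulliMaxLik (nabSBM n k z ab) (oabSBM n k z x ab) :=
  iSup_prod_bernoulli_eq_prod_bernoulliMaxLik _ _ (fun P _ _ => P.2.1 _ _) _ _
    (fun ab _ => oabSBM_le_nabSBM z x ab) ⟨sbmMLE z x, sbmMLE_mem_Icc z x, sbmMLE_comm z x⟩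
    fun _ hab => sbmMLE_of_le z x (mem_filter.1 hab).2

end SBM

theorem sbm_conditional_shtarkov_factorization_general (n k : ℕ)
    (z : Fin n → Fin k) :
    (∑ x : {p : Fin n × Fin n // p.1 < p.2} → Bool,
      ⨆ P : {P : Fin k → Fin k → ℝ //
          (∀ a b, P a b ∈ Set.Icc (0 : ℝ) 1) ∧ (∀ a b, P a b = P b a)},
        ∏ ab ∈ Finset.univ.filter (fun ab : Fin k × Fin k => ab.1 ≤ ab.2),
          (P.1 ab.1 ab.2) ^ (oabSBM n k z x ab) *
            (1 - P.1 ab.1 ab.2) ^ (nabSBM n k z ab - oabSBM n k z x ab)) =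
      ∏ ab ∈ Finset.univ.filter (fun ab : Fin k × Fin k => ab.1 ≤ ab.2),
        CMN2 (nabSBM n k z ab) := by
  have hempty {ab : Fin k × Fin k} (hab : ab ∉ univ.filter fun ab : Fin k × Fin k => ab.1 ≤ ab.2) :
      nabSBM n k z ab = 0 :=
    nabSBM_eq_zero_of_not_le z (by simpa using hab)
  calc _ = ∑ x, ∏ ab ∈ univ.filter (fun ab : Fin k × Fin k => ab.1 ≤ ab.2),
          bernoulliMaxLik (nabSBM n k z ab) (oabSBM n k z x ab) :=
        sum_congr rfl fun x _ => iSup_sbmLikelihood_eq z x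
    _ = ∑ x, ∏ ab, bernoulliMaxLik (nabSBM n k z ab) (oabSBM n k z x ab) :=
        sum_congr rfl fun x _ => prod_subset (subset_univ _) fun ab _ hab => by
          have hnab := hempty hab
          have hoab : oabSBM n k z x ab = 0 :=
            Nat.eq_zero_of_le_zero (hnab ▸ oabSBM_le_nabSBM z x ab)
          simp [hnab, hoab, bernoulliMaxLik]
    _ = ∏ ab, CMN2 (nabSBM n k z ab) := by
        simp only [nabSBM_eq_card, oabSBM_eq_card, CMN2_eq_sum_choose_mul_bernoulliMaxLik]
        exact sum_bool_fun_prod_card_fiber _ _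
    _ = _ := (prod_subset (subset_univ _) fun ab _ hab => by rw [hempty hab]; simp [CMN2]).symm

/-- The Shtarkov sum of the conditional SBM likelihood given the community assignment `z`
factorizes as a product over community pairs of Bernoulli Shtarkov sums:
`∑_x sup_P P(x|z) = ∏_{a ≤ b} C_MN(n_{ab}(z), 2)`. -/
theorem sbm_conditional_shtarkov_factorization (n k : ℕ) (hn : 1 ≤ n) (hk : 1 ≤ k)
    (z : Fin n → Fin k) :
    (∑ x : {p : Fin n × Fin n // p.1 < p.2} → Bool,
      ⨆ P : {P : Fin k → Fin k → ℝ //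
          (∀ a b, P a b ∈ Set.Icc (0 : ℝ) 1) ∧ (∀ a b, P a b = P b a)},
        ∏ ab ∈ Finset.univ.filter (fun ab : Fin k × Fin k => ab.1 ≤ ab.2),
          (P.1 ab.1 ab.2) ^ (oabSBM n k z x ab) *
            (1 - P.1 ab.1 ab.2) ^ (nabSBM n k z ab - oabSBM n k z x ab)) =
      ∏ ab ∈ Finset.univ.filter (fun ab : Fin k × Fin k => ab.1 ≤ ab.2),
        CMN2 (nabSBM n k z ab) :=
  sbm_conditional_shtarkov_factorization_general n k z
end

section
/- For every integers n ≥ 2 and k ≥ 1, the multinomial Shtarkov sum C_MN(n, k) = ∑_{e ∈ [k]^n} ∏_{a=1}^k (n_a(e)/n)^{n_a(e)} satisfies 1 ≤ C_MN(n, k) and log C_MN(n, k) ≤ ((k-1)/2) log n + c_k for a constant c_k depending only on k. -/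
open Finset

/-- The multinomial Shtarkov sum `C_MN(n, k) = ∑_{e : [k]^n} ∏_a (n_a(e)/n)^(n_a(e))`. -/
noncomputable def CMN (n k : ℕ) : ℝ :=
  ∑ e : Fin n → Fin k, ∏ a : Fin k,
    (((Finset.univ.filter (fun i => e i = a)).card : ℝ) / n) ^
      (Finset.univ.filter (fun i => e i = a)).card

/-!
Write `T(n, k) = n^n C_MN(n, k) = ∑_e ∏_a n_a(e)^{n_a(e)}`. Sorting the positions by whether they
carry the last letter gives `T(n, k+1) = ∑_m C(n, m) m^m T(n-m, k)`, so if `T(j, k) ≤ B j^j` for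
all `j ≤ n` then `T(n, k+1) ≤ B T(n, 2)`. Stirling's formula bounds each term of
`T(n, 2) = ∑_m C(n, m) m^m (n-m)^(n-m)` by `n^n O(m^{-1/2} + (n-m)^{-1/2})`, so
`T(n, 2) = O(√n n^n)`, and induction on `k` gives `C_MN(n, k+1) ≤ 16^k n^{k/2}`.
-/

open Real
open scoped Nat

section FiberWeightSum

variable {R : Type*} [CommSemiring R] (g : ℕ → R)

def fiberWeightSum (ι κ : Type*) [Fintype ι] [DecidableEq ι] [Fintype κ] [DecidableEq κ] : R :=
  ∑ e : ι → κ, ∏ a, g #{i | e i = a}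

variable {ι ι' κ κ' : Type*} [Fintype ι] [Fintype ι'] [Fintype κ] [Fintype κ']
  [DecidableEq ι] [DecidableEq ι'] [DecidableEq κ] [DecidableEq κ']

theorem fiberWeightSum_congr (ε : ι ≃ ι') (δ : κ ≃ κ') :
    fiberWeightSum g ι κ = fiberWeightSum g ι' κ' := by
  refine Fintype.sum_equiv (ε.arrowCongr δ) _ _ fun e => ?_
  refine Fintype.prod_equiv δ _ _ fun a => ?_
  congr 1
  exact card_equiv ε (by simp)

theorem fiberWeightSum_of_unique [Unique κ] : fiberWeightSum g ι κ = g (Fintype.card ι) := by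
  simp [fiberWeightSum, Subsingleton.elim _ (default : κ), card_univ]

theorem fiberWeightSum_option :
    fiberWeightSum g ι (Option κ) = ∑ S : Finset ι, g #S * fiberWeightSum g (↥Sᶜ) κ := by
  unfold fiberWeightSum
  simp_rw [Fintype.prod_option]
  refine (sum_fiberwise univ (fun e : ι → Option κ => ({i | e i = none} : Finset ι)) _).symm.trans
    (sum_congr rfl fun S _ => ?_)
  have mem {e : ι → Option κ} :
      e ∈ ({e | ({i | e i = none} : Finset ι) = S} : Finset _) ↔ ∀ i, e i = none ↔ i ∈ S := by
    simp [Finset.ext_iff]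
  rw [mul_sum]
  refine sum_bij' (fun e he j => (e j).get (Option.isSome_iff_ne_none.2 fun h =>
      mem_compl.1 j.2 ((mem.1 he _).1 h)))
    (fun f _ i => if h : i ∈ S then none else some (f ⟨i, mem_compl.2 h⟩))
    (fun _ _ => mem_univ _) (fun f _ => mem.2 fun i => by by_cases i ∈ S <;> simp [*])
    (fun e he => funext fun i => ?_) (fun f _ => funext fun j => by simp [mem_compl.1 j.2])
    (fun e he => ?_)
  · by_cases hi : i ∈ S
    · simp [hi, (mem.1 he i).2 hi]
    · simp [hi]
  · rw [(mem_filter.1 he).2]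
    congr 1
    refine prod_congr rfl fun a _ => congrArg g ?_
    refine (card_bij (fun (j : ↥Sᶜ) _ => (j : ι)) (fun j hj => ?_) (fun _ _ _ _ => Subtype.ext)
      fun i hi => ⟨⟨i, mem_compl.2 fun hiS => ?_⟩, ?_, rfl⟩).symm
    · simp only [mem_filter, mem_univ, true_and] at hj ⊢
      exact Option.eq_some_iff_get_eq.2 ⟨_, hj⟩
    · simp [(mem.1 he i).2 hiS] at hi
    · simp only [mem_filter, mem_univ, true_and] at hi ⊢
      exact (Option.eq_some_iff_get_eq.1 hi).2

theorem fiberWeightSum_fin_succ (n k : ℕ) :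
    fiberWeightSum g (Fin n) (Fin (k + 1)) =
      ∑ m ∈ range (n + 1), n.choose m * g m * fiberWeightSum g (Fin (n - m)) (Fin k) := by
  have compl_eq (S : Finset (Fin n)) :
      fiberWeightSum g (↥Sᶜ) (Fin k) = fiberWeightSum g (Fin (n - #S)) (Fin k) :=
    fiberWeightSum_congr g (Fintype.equivFinOfCardEq (by simp)) (Equiv.refl _)
  rw [fiberWeightSum_congr g (Equiv.refl _) (finSuccEquiv k), fiberWeightSum_option]
  simp_rw [compl_eq, ← powerset_univ]
  rw [sum_powerset_apply_card (fun m => g m * fiberWeightSum g (Fin (n - m)) (Fin k))]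
  simp [nsmul_eq_mul, mul_assoc]

end FiberWeightSum

theorem fiberWeightSum_fin_succ_le {R : Type*} [CommSemiring R] [PartialOrder R] [IsOrderedRing R]
    {g : ℕ → R} (hg : ∀ m, 0 ≤ g m) {n k : ℕ} {B : R}
    (hB : ∀ j ≤ n, fiberWeightSum g (Fin j) (Fin k) ≤ B * g j) :
    fiberWeightSum g (Fin n) (Fin (k + 1)) ≤ B * fiberWeightSum g (Fin n) (Fin 2) := by
  rw [fiberWeightSum_fin_succ g n k, fiberWeightSum_fin_succ g n 1, mul_sum]
  refine sum_le_sum fun m _ => ?_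
  rw [fiberWeightSum_of_unique g (κ := Fin 1), Fintype.card_fin, mul_left_comm B]
  exact mul_le_mul_of_nonneg_left (hB _ (Nat.sub_le n m)) (mul_nonneg (Nat.cast_nonneg _) (hg m))

theorem factorial_le_stirling {n : ℕ} (hn : n ≠ 0) :
    (n ! : ℝ) ≤ exp 1 * √n * (n / exp 1) ^ n := by
  have hseq : Stirling.stirlingSeq n ≤ exp 1 / √2 := by
    obtain ⟨m, rfl⟩ := Nat.exists_eq_succ_of_ne_zero hn
    rw [← Stirling.stirlingSeq_one]
    exact Stirling.stirlingSeq'_antitone (Nat.zero_le m)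
  rw [Stirling.stirlingSeq, div_le_iff₀ (by positivity)] at hseq
  calc (n ! : ℝ) ≤ exp 1 / √2 * (√(2 * n) * (n / exp 1) ^ n) := hseq
    _ = exp 1 * √n * (n / exp 1) ^ n := by
      rw [sqrt_mul zero_le_two]; field_simp

theorem choose_mul_pow_mul_pow_mul_sqrt_le {m l : ℕ} (hm : m ≠ 0) (hl : l ≠ 0) :
    ((m + l).choose m : ℝ) * m ^ m * l ^ l * (√m * √l) ≤ (m + l) ^ (m + l) * √(m + l) := by
  set x := ((m + l).choose m : ℝ) * m ^ m * l ^ l * (√m * √l)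
  set y : ℝ := (m + l) ^ (m + l) * √(m + l)
  have hsqrt (j : ℕ) : √(2 * π * j) = √(2 * π) * √j := sqrt_mul (by positivity) _
  have hfact : (m + l).choose m * m ! * l ! = (m + l)! := by
    simpa using Nat.choose_mul_factorial_mul_factorial (Nat.le_add_right m l)
  have key : 2 * π * x / exp 1 ^ (m + l) ≤ exp 1 * y / exp 1 ^ (m + l) :=
    calc 2 * π * x / exp 1 ^ (m + l)
        = (m + l).choose m * (√(2 * π * m) * (m / exp 1) ^ m) *
            (√(2 * π * l) * (l / exp 1) ^ l) := by
          rw [hsqrt, hsqrt, div_pow, div_pow, pow_add]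
          field_simp
          rw [sq_sqrt (by positivity)]
          ring
      _ ≤ (m + l).choose m * m ! * l ! := by gcongr <;> exact Stirling.le_factorial_stirling _
      _ = (m + l)! := by exact_mod_cast hfact
      _ ≤ exp 1 * √(m + l : ℕ) * ((m + l : ℕ) / exp 1) ^ (m + l) := factorial_le_stirling (by omega)
      _ = exp 1 * y / exp 1 ^ (m + l) := by push_cast; rw [div_pow]; ring
  have he : exp 1 ≤ 2 * π := by linarith [exp_one_lt_d9, pi_gt_three]
  rw [div_le_div_iff_of_pos_right (by positivity)] at key
  exact le_of_mul_le_mul_left (key.trans (by gcongr)) (by positivity)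

theorem sqrt_add_le_sqrt_add_sqrt {x y : ℝ} (hx : 0 ≤ x) (hy : 0 ≤ y) : √(x + y) ≤ √x + √y :=
  sqrt_le_iff.2 ⟨by positivity, by nlinarith [sq_sqrt hx, sq_sqrt hy, sqrt_nonneg x, sqrt_nonneg y]⟩

theorem sqrt_succ_le_two_mul_sqrt {m : ℕ} (hm : m ≠ 0) : √(m + 1) ≤ 2 * √m := by
  have hm1 : (1 : ℝ) ≤ m := by exact_mod_cast Nat.one_le_iff_ne_zero.2 hm
  rw [← sqrt_sq zero_le_two, ← sqrt_mul (by norm_num)]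
  exact sqrt_le_sqrt (by linarith)

theorem choose_mul_pow_mul_pow_le (m l : ℕ) :
    ((m + l).choose m : ℝ) * m ^ m * l ^ l ≤
      2 * (m + l) ^ (m + l) * ((√(m + 1))⁻¹ + (√(l + 1))⁻¹) := by
  rcases eq_or_ne m 0 with rfl | hm
  · have : 0 ≤ (√(l + 1))⁻¹ := by positivity
    simp only [Nat.choose_zero_right, CharP.cast_eq_zero, zero_add, pow_zero, Real.sqrt_one]
    nlinarith [pow_nonneg (Nat.cast_nonneg l : (0:ℝ) ≤ l) l]
  rcases eq_or_ne l 0 with rfl | hl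
  · have : 0 ≤ (√(m + 1))⁻¹ := by positivity
    simp only [add_zero, Nat.choose_self, CharP.cast_eq_zero, zero_add, pow_zero, Real.sqrt_one]
    nlinarith [pow_nonneg (Nat.cast_nonneg m : (0:ℝ) ≤ m) m]
  have one_le {j : ℕ} (hj : j ≠ 0) : 1 ≤ 2 * √j * (√(j + 1))⁻¹ := by
    rw [← div_eq_mul_inv, one_le_div (by positivity)]
    exact sqrt_succ_le_two_mul_sqrt hj
  have hsqrt : √(m + l) ≤ √m * √l * (2 * ((√(m + 1))⁻¹ + (√(l + 1))⁻¹)) :=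
    calc √(m + l) ≤ √m + √l := sqrt_add_le_sqrt_add_sqrt (by positivity) (by positivity)
      _ ≤ √m * (2 * √l * (√(l + 1))⁻¹) + √l * (2 * √m * (√(m + 1))⁻¹) :=
        add_le_add (le_mul_of_one_le_right (sqrt_nonneg _) (one_le hl))
          (le_mul_of_one_le_right (sqrt_nonneg _) (one_le hm))
      _ = √m * √l * (2 * ((√(m + 1))⁻¹ + (√(l + 1))⁻¹)) := by ring
  have hpos : 0 < √m * √l := by positivity
  refine le_of_mul_le_mul_right ?_ hpos
  calc _ ≤ (m + l) ^ (m + l) * √(m + l) := choose_mul_pow_mul_pow_mul_sqrt_le hm hl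
    _ ≤ (m + l) ^ (m + l) * (√m * √l * (2 * ((√(m + 1))⁻¹ + (√(l + 1))⁻¹))) := by gcongr
    _ = _ := by ring

theorem sum_range_inv_sqrt_succ_le (n : ℕ) : ∑ m ∈ range n, (√(m + 1))⁻¹ ≤ 2 * √n := by
  induction n with
  | zero => simp
  | succ n ih =>
    rw [sum_range_succ]
    have hn : √(n + 1) ^ 2 = √n ^ 2 + 1 := by
      rw [sq_sqrt (by positivity), sq_sqrt (by positivity)]
    have hpos : 0 < √(n + 1) := by positivity
    have step : (√(n + 1))⁻¹ ≤ 2 * √(n + 1) - 2 * √n := by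
      rw [inv_le_iff_one_le_mul₀' hpos]
      nlinarith [sq_nonneg (√(n + 1) - √n)]
    push_cast
    linarith

theorem fiberWeightSum_pow_self_fin_two_le (n : ℕ) :
    fiberWeightSum (fun c : ℕ => (c : ℝ) ^ c) (Fin n) (Fin 2) ≤ 8 * √(n + 1) * n ^ n := by
  rw [fiberWeightSum_fin_succ]
  simp only [fiberWeightSum_of_unique _ (κ := Fin 1), Fintype.card_fin]
  calc ∑ m ∈ range (n + 1), (n.choose m : ℝ) * m ^ m * ((n - m : ℕ) : ℝ) ^ (n - m)
      ≤ ∑ m ∈ range (n + 1), 2 * n ^ n * ((√(m + 1))⁻¹ + (√((n - m : ℕ) + 1))⁻¹) := by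
        refine sum_le_sum fun m hm => ?_
        obtain ⟨l, rfl⟩ := Nat.exists_eq_add_of_le (mem_range_succ_iff.1 hm)
        simpa using choose_mul_pow_mul_pow_le m l
    _ = 4 * n ^ n * ∑ m ∈ range (n + 1), (√(m + 1))⁻¹ := by
        have reflect : ∑ m ∈ range (n + 1), (√((n - m : ℕ) + 1))⁻¹ =
            ∑ m ∈ range (n + 1), (√(m + 1))⁻¹ := by
          simpa using sum_range_reflect (fun m : ℕ => (√((m : ℝ) + 1))⁻¹) (n + 1)
        rw [← mul_sum, sum_add_distrib, reflect]
        ring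
    _ ≤ 4 * n ^ n * (2 * √(n + 1)) := by
        gcongr
        exact_mod_cast sum_range_inv_sqrt_succ_le (n + 1)
    _ = 8 * √(n + 1) * n ^ n := by ring

theorem fiberWeightSum_pow_self_le (n k : ℕ) :
    fiberWeightSum (fun c : ℕ => (c : ℝ) ^ c) (Fin n) (Fin (k + 1)) ≤
      8 ^ k * √(n + 1) ^ k * n ^ n := by
  induction k generalizing n with
  | zero => simp [fiberWeightSum_of_unique]
  | succ k ih =>
    calc _ ≤ 8 ^ k * √(n + 1) ^ k * fiberWeightSum (fun c : ℕ => (c : ℝ) ^ c) (Fin n) (Fin 2) :=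
          fiberWeightSum_fin_succ_le (fun m => by positivity) fun j hj =>
            (ih j).trans (by gcongr)
      _ ≤ 8 ^ k * √(n + 1) ^ k * (8 * √(n + 1) * n ^ n) := by
          gcongr
          exact fiberWeightSum_pow_self_fin_two_le n
      _ = _ := by ring

theorem CMN_eq_fiberWeightSum_div (n k : ℕ) :
    CMN n k = fiberWeightSum (fun c : ℕ => (c : ℝ) ^ c) (Fin n) (Fin k) / n ^ n := by
  rw [CMN, fiberWeightSum, sum_div]
  refine sum_congr rfl fun e _ => ?_
  simp_rw [div_pow]
  rw [prod_div_distrib, prod_pow_eq_pow_sum,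
    ← card_eq_sum_card_fiberwise (fun i _ => mem_univ (e i)), card_univ, Fintype.card_fin]

theorem CMN_succ_le {n : ℕ} (hn : n ≠ 0) (k : ℕ) : CMN n (k + 1) ≤ 16 ^ k * √n ^ k := by
  rw [CMN_eq_fiberWeightSum_div, div_le_iff₀ (by positivity)]
  calc _ ≤ 8 ^ k * √(n + 1) ^ k * n ^ n := fiberWeightSum_pow_self_le n k
    _ ≤ 8 ^ k * (2 * √n) ^ k * n ^ n := by gcongr; exact sqrt_succ_le_two_mul_sqrt hn
    _ = _ := by rw [mul_pow, ← mul_assoc, ← mul_pow]; norm_num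

theorem one_le_CMN (n : ℕ) {k : ℕ} (hk : k ≠ 0) : 1 ≤ CMN n k := by
  let c : Fin k := ⟨0, Nat.pos_of_ne_zero hk⟩
  have hconst : ∏ a, ((#{i : Fin n | c = a} : ℝ) / n) ^ #{i : Fin n | c = a} = 1 :=
    prod_eq_one fun a _ => by
      rcases eq_or_ne n 0 with rfl | hn
      · simp
      · by_cases h : c = a <;> simp [h, hn]
  exact hconst ▸ single_le_sum (f := fun e : Fin n → Fin k =>
    ∏ a, ((#{i | e i = a} : ℝ) / n) ^ #{i | e i = a})
    (fun e _ => prod_nonneg fun a _ => by positivity) (mem_univ fun _ => c)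

/-- For every `k ≥ 1` there is a constant `c_k` depending only on `k` such that for all
`n ≥ 2`: `1 ≤ C_MN(n,k)` and `log C_MN(n,k) ≤ ((k-1)/2) log n + c_k`. -/
theorem CMN_bounds (k : ℕ) (hk : 1 ≤ k) :
    ∃ c : ℝ, ∀ n : ℕ, 2 ≤ n →
      1 ≤ CMN n k ∧
      Real.log (CMN n k) ≤ (((k : ℝ) - 1)/2) * Real.log n + c := by
  obtain ⟨j, rfl⟩ := Nat.exists_eq_add_of_le' hk
  refine ⟨j * log 16, fun n hn => ?_⟩
  have hlower : 1 ≤ CMN n (j + 1) := one_le_CMN n (Nat.succ_ne_zero j)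
  refine ⟨hlower, ?_⟩
  calc log (CMN n (j + 1)) ≤ log (16 ^ j * √n ^ j) :=
        log_le_log (by linarith) (CMN_succ_le (by omega) j)
    _ = ((j + 1 : ℕ) - 1) / 2 * log n + j * log 16 := by
        rw [log_mul (by positivity) (by positivity), log_pow, log_pow, log_sqrt (by positivity)]
        push_cast
        ring
end
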